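/- Transfer identity for single-target polynomials: in a one-sided ladder region Y, with P_i = (i,n) and Q_j = (m, b_j), the r-tuple non-intersecting-path generating polynomial satisfies W(n,m; b_1,…,b_r) = ∑_{d ∈ S_r, (m,d_r) ∈ Y} [d; b] · W(n, m-1; d_1,…,d_r), where the sum is over strictly increasing r-tuples d with b_i ≤ d_i < b_{i+1} (setting b_{r+1}-1 to be the maximal j with (m,j) ∈ Y), and [d;b] = ∏_i [d_i, b_i] with [d_i,b_i] = t if d_i > b_i and 1 if d_i = b_i. -/

import Mathlib

open Polynomial Finset

/-- The order on the grid: `(i,j) ≤ (i',j')` iff `i' ≤ i` and `j ≤ j'`. -/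
def ple (x y : ℕ × ℕ) : Prop := y.1 ≤ x.1 ∧ x.2 ≤ y.2

/-- `C` is a path from `P` to `Q` inside the region `Y`: a maximal chain (for the order
`ple`) in `Y` with end points `P` and `Q`. -/
def IsPath (Y : Set (ℕ × ℕ)) (P Q : ℕ × ℕ) (C : Finset (ℕ × ℕ)) : Prop :=
  (C : Set (ℕ × ℕ)) ⊆ Y ∧ P ∈ C ∧ Q ∈ C ∧
  (∀ x ∈ C, ple Q x ∧ ple x P) ∧
  (∀ x ∈ C, ∀ y ∈ C, ple x y ∨ ple y x) ∧
  (∀ z ∈ Y, ple Q z → ple z P → (∀ x ∈ C, ple x z ∨ ple z x) → z ∈ C)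

/-- Number of corners of a path: points `(i,j) ∈ C` with `(i-1,j) ∈ C` and `(i,j-1) ∈ C`. -/
def cornersCount (C : Finset (ℕ × ℕ)) : ℕ :=
  (C.filter (fun p => (p.1 - 1, p.2) ∈ C ∧ (p.1, p.2 - 1) ∈ C)).card

/-- Number of paths from `P` to `Q` in `Y` with exactly `k` corners. -/
noncomputable def pathCount (Y : Set (ℕ × ℕ)) (P Q : ℕ × ℕ) (k : ℕ) : ℕ :=
  Set.ncard {C : Finset (ℕ × ℕ) | IsPath Y P Q C ∧ cornersCount C = k}

/-- Corner-counting generating polynomial for single paths; `N` is any bound larger than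
the possible number of corners, so that the sum agrees with `∑_{k ≥ 0} w_k(P,Q) tᵏ`. -/
noncomputable def Wpoly (Y : Set (ℕ × ℕ)) (P Q : ℕ × ℕ) (N : ℕ) : Polynomial ℚ :=
  ∑ k ∈ Finset.range N, (pathCount Y P Q k : Polynomial ℚ) * X ^ k

/-- Number of `r`-tuples of pairwise disjoint paths from `P i` to `Q i` in `Y` with `k`
corners in total. -/
noncomputable def tupleCount (Y : Set (ℕ × ℕ)) {r : ℕ} (P Q : Fin r → ℕ × ℕ) (k : ℕ) : ℕ :=
  Set.ncard {C : Fin r → Finset (ℕ × ℕ) |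
    (∀ i, IsPath Y (P i) (Q i) (C i)) ∧ (∀ i j, i ≠ j → Disjoint (C i) (C j)) ∧
    ∑ i, cornersCount (C i) = k}

/-- Total number of `r`-tuples of pairwise disjoint paths from `P i` to `Q i` in `Y`. -/
noncomputable def tupleCountAll (Y : Set (ℕ × ℕ)) {r : ℕ} (P Q : Fin r → ℕ × ℕ) : ℕ :=
  Set.ncard {C : Fin r → Finset (ℕ × ℕ) |
    (∀ i, IsPath Y (P i) (Q i) (C i)) ∧ (∀ i j, i ≠ j → Disjoint (C i) (C j))}

/-- Corner-counting generating polynomial for `r`-tuples of non-intersecting paths. -/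
noncomputable def WTpoly (Y : Set (ℕ × ℕ)) {r : ℕ} (P Q : Fin r → ℕ × ℕ) (N : ℕ) :
    Polynomial ℚ :=
  ∑ k ∈ Finset.range N, (tupleCount Y P Q k : Polynomial ℚ) * X ^ k

/-- Rectangular grid region `{(i,j) : 1 ≤ i ≤ m, 1 ≤ j ≤ n}`. -/
def grid (m n : ℕ) : Set (ℕ × ℕ) :=
  {p | 1 ≤ p.1 ∧ p.1 ≤ m ∧ 1 ≤ p.2 ∧ p.2 ≤ n}

/-- One-sided ladder-shaped region with (weakly decreasing) height function `h`. -/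
def ladder (m n : ℕ) (h : ℕ → ℕ) : Set (ℕ × ℕ) :=
  {p | 1 ≤ p.1 ∧ p.1 ≤ m ∧ 1 ≤ p.2 ∧ p.2 ≤ n ∧ p.2 ≤ h p.1}

/-- Tuple bracket: `0` if `d i ≥ b (i+1)` for some `i < r`, and `∏ᵢ [dᵢ, bᵢ]` otherwise. -/
noncomputable def brkT {l : ℕ} (c b : Fin l → ℕ) : Polynomial ℚ :=
  if ∀ i : Fin l, ∀ h : (i : ℕ) + 1 < l, c i < b ⟨(i : ℕ) + 1, h⟩ then
    ∏ i, (if b i < c i then X else if c i = b i then 1 else (0 : Polynomial ℚ))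
  else 0

/-!
A path from `(p, n)` to `(m + 1, b)` with `p ≤ m` enters the last column at the highest row `d` it
reaches there, coming from `(m, d)`, and then runs down the column to `(m + 1, b)`. Cutting off this
vertical segment is a bijection onto the paths ending at `(m, d)`, for `b ≤ d ≤ h (m + 1)`; it
removes the corner `(m + 1, d)` when `d > b` and no corner when `d = b`. For non-intersecting
tuples the rows satisfy `bᵢ ≤ dᵢ < bᵢ₊₁`, since otherwise the segment of path `i` would contain the
end point of path `i + 1`; conversely, segments attached along such rows never meet. Grouping the
tuples by their rows `d` gives the identity.
-/

lemma card_le_of_isChain_ladder {m n : ℕ} {h : ℕ → ℕ} {C : Finset (ℕ × ℕ)}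
    (hsub : (C : Set (ℕ × ℕ)) ⊆ ladder m n h)
    (hchain : ∀ x ∈ C, ∀ y ∈ C, ple x y ∨ ple y x) : #C ≤ m + n := by
  -- along a chain, `x ↦ x.1 + (n - x.2)` is injective, with values in `[1, m + n]`
  calc #C ≤ #(Icc 1 (m + n)) := by
        refine card_le_card_of_injOn (fun x => x.1 + (n - x.2)) (fun x hx => ?_)
          fun x hx y hy hxy => ?_
        · obtain ⟨_, _, _, _, _⟩ := hsub hx
          simp only [coe_Icc, Set.mem_Icc]
          omega
        · obtain ⟨_, _, _, _, _⟩ := hsub hx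
          obtain ⟨_, _, _, _, _⟩ := hsub hy
          have : x.1 + (n - x.2) = y.1 + (n - y.2) := hxy
          rcases hchain x hx y hy with ⟨_, _⟩ | ⟨_, _⟩ <;> exact Prod.ext (by omega) (by omega)
    _ = m + n := by simp

def pathTuples (Y : Set (ℕ × ℕ)) {r : ℕ} (P Q : Fin r → ℕ × ℕ) :
    Set (Fin r → Finset (ℕ × ℕ)) :=
  {C | (∀ i, IsPath Y (P i) (Q i) (C i)) ∧ ∀ i j, i ≠ j → Disjoint (C i) (C j)}

lemma pathTuples_ladder_finite (m n : ℕ) (h : ℕ → ℕ) {r : ℕ} (P Q : Fin r → ℕ × ℕ) :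
    (pathTuples (ladder m n h) P Q).Finite := by
  refine (Set.Finite.pi fun _ => (Icc (1, 1) (m, n)).powerset.finite_toSet).subset
    fun C hC i _ => ?_
  simp only [coe_powerset, Set.mem_preimage, Set.mem_powerset_iff, coe_subset]
  intro x hx
  obtain ⟨h1, h2, h3, h4, -⟩ := (hC.1 i).1 hx
  exact mem_Icc.2 ⟨⟨h1, h3⟩, h2, h4⟩

lemma WTpoly_ladder_eq_sum (m n : ℕ) (h : ℕ → ℕ) {r : ℕ} (P Q : Fin r → ℕ × ℕ) :
    WTpoly (ladder m n h) P Q (r * (m + n) + 1) =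
      ∑ C ∈ (pathTuples_ladder_finite m n h P Q).toFinset,
        (X : ℚ[X]) ^ ∑ i, cornersCount (C i) := by
  have hlt : ∀ C ∈ (pathTuples_ladder_finite m n h P Q).toFinset,
      ∑ i, cornersCount (C i) ∈ range (r * (m + n) + 1) := by
    intro C hC
    obtain ⟨hpaths, -⟩ := (Set.Finite.mem_toFinset _).1 hC
    have hle : ∀ i, cornersCount (C i) ≤ m + n := fun i =>
      (card_filter_le _ _).trans (card_le_of_isChain_ladder (hpaths i).1 (hpaths i).2.2.2.2.1)
    have := sum_le_sum fun i (_ : i ∈ univ) => hle i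
    simp only [sum_const, card_univ, Fintype.card_fin, smul_eq_mul] at this
    exact mem_range.2 (Nat.lt_succ_of_le this)
  rw [WTpoly, ← sum_fiberwise_of_maps_to hlt]
  refine sum_congr rfl fun k _ => ?_
  rw [sum_congr rfl fun C hC => by rw [(mem_filter.1 hC).2], sum_const, nsmul_eq_mul,
    tupleCount, ← Set.ncard_coe_finset]
  congr 3
  ext C
  simp [pathTuples, and_assoc]

def entryRow (C : Finset (ℕ × ℕ)) (m : ℕ) : ℕ := (C.filter (·.1 = m)).sup Prod.snd

-- The last column is written `m + 1`, so that the previous one, `m`, needs no truncated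
-- subtraction.
section LastColumn

variable {Y : Set (ℕ × ℕ)} {P x : ℕ × ℕ} {m n p b d : ℕ} {h : ℕ → ℕ} {C : Finset (ℕ × ℕ)}

lemma mem_singleton_product_Icc :
    x ∈ ({m} ×ˢ Icc b d : Finset (ℕ × ℕ)) ↔ x.1 = m ∧ b ≤ x.2 ∧ x.2 ≤ d := by
  rw [mem_product, mem_singleton, mem_Icc]

lemma snd_le_entryRow (hx : x ∈ C) (hxm : x.1 = m) : x.2 ≤ entryRow C m :=
  le_sup (f := Prod.snd) (mem_filter.2 ⟨hx, hxm⟩)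

lemma IsPath.entryRow_mem (hC : IsPath Y P (m, b) C) : (m, entryRow C m) ∈ C := by
  obtain ⟨x, hx, hxd⟩ :=
    exists_mem_eq_sup (C.filter (·.1 = m)) ⟨_, mem_filter.2 ⟨hC.2.2.1, rfl⟩⟩ Prod.snd
  rw [mem_filter] at hx
  rw [entryRow, hxd, ← hx.2]
  exact hx.1

lemma IsPath.fst_lt_of_fst_ne (hC : IsPath Y P (m, b) C) (hx : x ∈ C) (hxm : x.1 ≠ m) :
    x.1 < m ∧ entryRow C m ≤ x.2 := by
  obtain ⟨-, -, -, hbnd, hchain, -⟩ := id hC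
  have hxm' : x.1 ≤ m := (hbnd x hx).1.1
  rcases hchain x hx _ hC.entryRow_mem with hc | hc
  · exact absurd (le_antisymm hxm' hc.1) hxm
  · exact ⟨lt_of_le_of_ne hxm' hxm, hc.2⟩

lemma IsPath.eq_union_column (hpm : p ≤ m + 1)
    (hC : IsPath (ladder (m + 1) n h) (p, n) (m + 1, b) C) :
    C = C.filter (·.1 ≤ m) ∪ {m + 1} ×ˢ Icc b (entryRow C (m + 1)) := by
  obtain ⟨hsub, -, hQ, hbnd, -, hmax⟩ := id hC
  obtain ⟨-, -, hb1, -, -⟩ := hsub hQ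
  obtain ⟨-, -, -, hdn, hdh⟩ := hsub hC.entryRow_mem
  have hdh : entryRow C (m + 1) ≤ h (m + 1) := hdh
  ext ⟨i, j⟩
  simp only [mem_union, mem_filter, mem_product, mem_singleton, mem_Icc]
  constructor
  · intro hx
    by_cases him : i = m + 1
    · exact Or.inr ⟨him, (hbnd _ hx).1.2, snd_le_entryRow hx him⟩
    · exact Or.inl ⟨hx, Nat.le_of_lt_succ (hC.fst_lt_of_fst_ne hx him).1⟩
  · rintro (⟨hx, -⟩ | ⟨rfl, hbj, hjd⟩)
    · exact hx
    refine hmax _ ⟨by omega, le_rfl, by omega, by omega, hjd.trans hdh⟩ ⟨le_rfl, hbj⟩ ⟨hpm, by omega⟩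
      fun y hy => ?_
    by_cases hym : y.1 = m + 1
    · rcases le_total y.2 j with hle | hle
      · exact Or.inl ⟨hym.ge, hle⟩
      · exact Or.inr ⟨hym.le, hle⟩
    · obtain ⟨h1, h2⟩ := hC.fst_lt_of_fst_ne hy hym
      exact Or.inr ⟨h1.le, hjd.trans h2⟩

lemma IsPath.truncate (hanti : Antitone h) (hpm : p ≤ m)
    (hC : IsPath (ladder (m + 1) n h) (p, n) (m + 1, b) C) :
    IsPath (ladder (m + 1) n h) (p, n) (m, entryRow C (m + 1)) (C.filter (·.1 ≤ m)) := by
  obtain ⟨hsub, hP, -, hbnd, hchain, hmax⟩ := id hC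
  set d := entryRow C (m + 1)
  have hd : (m + 1, d) ∈ C := hC.entryRow_mem
  obtain ⟨-, -, hd1, hdn, hdh⟩ := hsub hd
  obtain ⟨hp1, -⟩ := hsub hP
  have hbd : b ≤ d := (hbnd _ hd).1.2
  have hd' : (m, d) ∈ C := by
    refine hmax _ ⟨by omega, by omega, hd1, hdn, hdh.trans (hanti m.le_succ)⟩
      ⟨m.le_succ, hbd⟩ ⟨hpm, hdn⟩ fun x hx => ?_
    by_cases hxm : x.1 = m + 1
    · exact Or.inl ⟨by simp [hxm], snd_le_entryRow hx hxm⟩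
    · obtain ⟨h1, h2⟩ := hC.fst_lt_of_fst_ne hx hxm
      exact Or.inr ⟨by simp only; omega, h2⟩
  refine ⟨fun x hx => hsub (mem_filter.1 hx).1, mem_filter.2 ⟨hP, hpm⟩, mem_filter.2 ⟨hd', le_rfl⟩,
    fun x hx => ?_, fun x hx y hy => hchain x (mem_filter.1 hx).1 y (mem_filter.1 hy).1,
    fun z hz hQz hzP hcomp => ?_⟩
  · rw [mem_filter] at hx
    exact ⟨⟨hx.2, (hC.fst_lt_of_fst_ne hx.1 (by omega)).2⟩, (hbnd x hx.1).2⟩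
  · have hzm : z.1 ≤ m := hQz.1
    refine mem_filter.2 ⟨hmax z hz ⟨by simp only; omega, hbd.trans hQz.2⟩ hzP fun x hx => ?_, hzm⟩
    by_cases hxm : x.1 ≤ m
    · exact hcomp x (mem_filter.2 ⟨hx, hxm⟩)
    · have : x.1 ≤ m + 1 := (hbnd x hx).1.1
      exact Or.inl ⟨by omega, (snd_le_entryRow hx (by omega)).trans hQz.2⟩

lemma IsPath.union_column (hb1 : 1 ≤ b) (hbd : b ≤ d) (hdh : d ≤ h (m + 1))
    (hC : IsPath (ladder (m + 1) n h) (p, n) (m, d) C) :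
    IsPath (ladder (m + 1) n h) (p, n) (m + 1, b) (C ∪ {m + 1} ×ˢ Icc b d) := by
  obtain ⟨hsub, hP, hQ, hbnd, hchain, hmax⟩ := hC
  obtain ⟨hm1, -, -, hdn, -⟩ := hsub hQ
  have hpm : p ≤ m := (hbnd _ hQ).2.1
  have hmd : (m + 1, d) ∈ ({m + 1} ×ˢ Icc b d : Finset _) := mem_singleton_product_Icc.2 ⟨rfl, hbd, le_rfl⟩
  refine ⟨fun x hx => ?_, mem_union_left _ hP, mem_union_right _ (mem_singleton_product_Icc.2 ⟨rfl, le_rfl, hbd⟩),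
    fun x hx => ?_, fun x hx y hy => ?_, fun z hz hQz hzP hcomp => ?_⟩
  · rcases mem_union.1 hx with hx | hx
    · exact hsub hx
    · obtain ⟨h1, h2, h3⟩ := mem_singleton_product_Icc.1 hx
      exact ⟨by omega, by omega, by omega, by omega, h1 ▸ h3.trans hdh⟩
  · rcases mem_union.1 hx with hx | hx
    · obtain ⟨⟨h1, h2⟩, hxP⟩ := hbnd x hx
      exact ⟨⟨by simp only at h1 ⊢; omega, hbd.trans h2⟩, hxP⟩
    · obtain ⟨h1, h2, h3⟩ := mem_singleton_product_Icc.1 hx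
      exact ⟨⟨h1.le, h2⟩, ⟨by simp only; omega, h3.trans hdn⟩⟩
  · rcases mem_union.1 hx with hx | hx <;> rcases mem_union.1 hy with hy | hy
    · exact hchain x hx y hy
    · obtain ⟨h1, -, h3⟩ := mem_singleton_product_Icc.1 hy
      obtain ⟨h4, h5⟩ := (hbnd x hx).1
      exact Or.inr ⟨by simp only at h4; omega, h3.trans h5⟩
    · obtain ⟨h1, -, h3⟩ := mem_singleton_product_Icc.1 hx
      obtain ⟨h4, h5⟩ := (hbnd y hy).1
      exact Or.inl ⟨by simp only at h4; omega, h3.trans h5⟩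
    · obtain ⟨h1, -, -⟩ := mem_singleton_product_Icc.1 hx
      obtain ⟨h2, -, -⟩ := mem_singleton_product_Icc.1 hy
      rcases le_total x.2 y.2 with hle | hle
      · exact Or.inl ⟨by omega, hle⟩
      · exact Or.inr ⟨by omega, hle⟩
  · have hzm : z.1 ≤ m + 1 := hQz.1
    by_cases hz1 : z.1 = m + 1
    · rcases hcomp _ (mem_union_left _ hQ) with hc | hc
      · exact absurd hc.1 (by simp only; omega)
      · exact mem_union_right _ (mem_singleton_product_Icc.2 ⟨hz1, hQz.2, hc.2⟩)
    · rcases hcomp _ (mem_union_right _ hmd) with hc | hc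
      · refine mem_union_left _ (hmax z hz ⟨by simp only; omega, hc.2⟩ hzP
          fun x hx => hcomp x (mem_union_left _ hx))
      · exact absurd hc.1 (by simp only; omega)

lemma filter_union_column (hC : ∀ x ∈ C, x.1 ≤ m) :
    (C ∪ {m + 1} ×ˢ Icc b d).filter (·.1 ≤ m) = C := by
  rw [filter_union, filter_true_of_mem hC, filter_false_of_mem, union_empty]
  intro x hx
  simp [mem_singleton_product_Icc.1 hx]

lemma entryRow_union_column (hbd : b ≤ d) (hC : ∀ x ∈ C, x.1 ≤ m) :
    entryRow (C ∪ {m + 1} ×ˢ Icc b d) (m + 1) = d := by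
  have : (C ∪ {m + 1} ×ˢ Icc b d).filter (·.1 = m + 1) = {m + 1} ×ˢ Icc b d := by
    rw [filter_union, filter_false_of_mem fun x hx => by have := hC x hx; omega,
      filter_true_of_mem fun x hx => (mem_singleton_product_Icc.1 hx).1, empty_union]
  rw [entryRow, this]
  exact le_antisymm (Finset.sup_le fun x hx => (mem_singleton_product_Icc.1 hx).2.2)
    (le_sup (f := Prod.snd) (b := (m + 1, d)) (mem_singleton_product_Icc.2 ⟨rfl, hbd, le_rfl⟩))

lemma cornersCount_union_column (hb1 : 1 ≤ b) (hbd : b ≤ d)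
    (hd : (m, d) ∈ C) (hC : ∀ x ∈ C, x.1 ≤ m ∧ d ≤ x.2) :
    cornersCount (C ∪ {m + 1} ×ˢ Icc b d) = cornersCount C + if b < d then 1 else 0 := by
  set S : Finset (ℕ × ℕ) := {m + 1} ×ˢ Icc b d
  have hnotS : ∀ y : ℕ × ℕ, y.1 ≤ m → y ∉ S := fun y hy hyS => by
    have := (mem_singleton_product_Icc.1 hyS).1
    omega
  have hcorners_C : C.filter (fun x => (x.1 - 1, x.2) ∈ C ∪ S ∧ (x.1, x.2 - 1) ∈ C ∪ S) =
      C.filter (fun x => (x.1 - 1, x.2) ∈ C ∧ (x.1, x.2 - 1) ∈ C) := by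
    refine filter_congr fun x hx => ?_
    have := (hC x hx).1
    rw [mem_union, mem_union, or_iff_left (hnotS _ (by dsimp only; omega)),
      or_iff_left (hnotS _ (by dsimp only; omega))]
  -- the only new corner is the point `(m + 1, d)` where the path turns into the last column
  have hcorners_S : S.filter (fun x => (x.1 - 1, x.2) ∈ C ∪ S ∧ (x.1, x.2 - 1) ∈ C ∪ S) =
      ({(m + 1, d)} : Finset (ℕ × ℕ)).filter (fun _ => b < d) := by
    ext ⟨i, j⟩
    simp only [mem_filter, mem_union, mem_singleton, Prod.mk.injEq, S, mem_singleton_product_Icc]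
    constructor
    · rintro ⟨⟨rfl, hbj, hjd⟩, hleft, hdown⟩
      obtain rfl : j = d := by
        rcases hleft with h' | h'
        · have := (hC _ h').2
          omega
        · omega
      rcases hdown with h' | h'
      · exact absurd (hC _ h').1 (by omega)
      · exact ⟨⟨rfl, rfl⟩, by omega⟩
    · rintro ⟨⟨rfl, rfl⟩, hlt⟩
      exact ⟨⟨rfl, hbd, le_rfl⟩, Or.inl (by simpa using hd), Or.inr ⟨rfl, by omega, by omega⟩⟩
  have hCS : Disjoint C S := disjoint_left.2 fun y hy => hnotS y (hC y hy).1
  rw [cornersCount, cornersCount, filter_union, card_union_of_disjoint (disjoint_filter_filter hCS),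
    hcorners_C, hcorners_S, filter_singleton]
  split_ifs <;> simp

end LastColumn

def Interlaces {r : ℕ} (b d : Fin r → ℕ) : Prop :=
  (∀ i, b i ≤ d i) ∧ ∀ (i : Fin r) (hi : (i : ℕ) + 1 < r), d i < b ⟨(i : ℕ) + 1, hi⟩

section Tuples

variable {r m n : ℕ} {h : ℕ → ℕ} {p b d : Fin r → ℕ} {C : Fin r → Finset (ℕ × ℕ)}

lemma Interlaces.lt_of_lt (hbd : Interlaces b d) (hb : Monotone b) {i j : Fin r} (hij : i < j) :
    d i < b j :=
  (hbd.2 i (by omega)).trans_le (hb (Fin.le_def.2 (by simp only; omega)))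

lemma Interlaces.strictMono (hbd : Interlaces b d) (hb : Monotone b) : StrictMono d :=
  fun _ j hij => (hbd.lt_of_lt hb hij).trans_le (hbd.1 j)

lemma brkT_of_interlaces (hbd : Interlaces b d) :
    brkT d b = X ^ ∑ i, if b i < d i then 1 else 0 := by
  rw [brkT, if_pos hbd.2, ← prod_pow_eq_pow_sum]
  refine prod_congr rfl fun i _ => ?_
  rcases (hbd.1 i).lt_or_eq with hlt | heq
  · simp [hlt]
  · simp [heq]

lemma brkT_of_not_interlaces (hbd : ¬Interlaces b d) : brkT d b = 0 := by
  rw [brkT]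
  split_ifs with hlt
  · obtain ⟨i, hi⟩ : ∃ i, d i < b i := by
      by_contra! hle
      exact hbd ⟨hle, hlt⟩
    exact prod_eq_zero (mem_univ i) (by simp [hi.ne, hi.not_gt])
  · rfl

lemma interlaces_entryRow (hp : ∀ i, p i ≤ m + 1) (hb : Monotone b)
    (hC : C ∈ pathTuples (ladder (m + 1) n h) (fun i => (p i, n)) fun i => (m + 1, b i)) :
    Interlaces b fun i => entryRow (C i) (m + 1) := by
  obtain ⟨hpaths, hdisj⟩ := hC
  refine ⟨fun i => ((hpaths i).2.2.2.1 _ (hpaths i).entryRow_mem).1.2, fun i hi => ?_⟩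
  set j : Fin r := ⟨i + 1, hi⟩
  have hij : i < j := Fin.lt_def.2 (by simp [j])
  by_contra! hle
  -- otherwise the `i`-th path runs through the end point of the `j`-th one
  have hmem : (m + 1, b j) ∈ C i := by
    rw [(hpaths i).eq_union_column (hp i)]
    exact mem_union_right _ (mem_singleton_product_Icc.2 ⟨rfl, hb hij.le, hle⟩)
  exact disjoint_left.1 (hdisj i j hij.ne) hmem (hpaths j).2.2.1

lemma truncate_mem_pathTuples (hanti : Antitone h) (hp : ∀ i, p i ≤ m)
    (hC : C ∈ pathTuples (ladder (m + 1) n h) (fun i => (p i, n)) fun i => (m + 1, b i)) :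
    (fun i => (C i).filter (·.1 ≤ m)) ∈
      pathTuples (ladder (m + 1) n h) (fun i => (p i, n)) fun i => (m, entryRow (C i) (m + 1)) :=
  ⟨fun i => (hC.1 i).truncate hanti (hp i),
    fun i j hij => (hC.2 i j hij).mono (filter_subset _ _) (filter_subset _ _)⟩

lemma union_column_mem_pathTuples (hb : Monotone b) (hb1 : ∀ i, 1 ≤ b i) (hbd : Interlaces b d)
    (hdh : ∀ i, d i ≤ h (m + 1))
    (hC : C ∈ pathTuples (ladder (m + 1) n h) (fun i => (p i, n)) fun i => (m, d i)) :
    (fun i => C i ∪ {m + 1} ×ˢ Icc (b i) (d i)) ∈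
      pathTuples (ladder (m + 1) n h) (fun i => (p i, n)) fun i => (m + 1, b i) := by
  obtain ⟨hpaths, hdisj⟩ := hC
  refine ⟨fun i => (hpaths i).union_column (hb1 i) (hbd.1 i) (hdh i), fun i j hij => ?_⟩
  have hCS : ∀ k l, Disjoint (C k) ({m + 1} ×ˢ Icc (b l) (d l)) := fun k _ =>
    disjoint_left.2 fun x hx hx' => by
      have : x.1 ≤ m := ((hpaths k).2.2.2.1 x hx).1.1
      have := (mem_singleton_product_Icc.1 hx').1
      omega
  have hSS : Disjoint ({m + 1} ×ˢ Icc (b i) (d i)) ({m + 1} ×ˢ Icc (b j) (d j)) := by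
    refine disjoint_left.2 fun x hxi hxj => ?_
    obtain ⟨-, hi1, hi2⟩ := mem_singleton_product_Icc.1 hxi
    obtain ⟨-, hj1, hj2⟩ := mem_singleton_product_Icc.1 hxj
    rcases hij.lt_or_gt with hlt | hlt
    · have := hbd.lt_of_lt hb hlt
      omega
    · have := hbd.lt_of_lt hb hlt
      omega
  rw [disjoint_union_left, disjoint_union_right, disjoint_union_right]
  exact ⟨⟨hdisj i j hij, hCS i j⟩, (hCS j i).symm, hSS⟩

lemma sum_fiber_entryRow (hanti : Antitone h) (hp : ∀ i, p i ≤ m) (hb : Monotone b)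
    (hb1 : ∀ i, 1 ≤ b i) (hbd : Interlaces b d) (hdh : ∀ i, d i ≤ h (m + 1)) :
    ∑ C ∈ (pathTuples_ladder_finite (m + 1) n h (fun i => (p i, n))
          fun i => (m + 1, b i)).toFinset with (fun i => entryRow (C i) (m + 1)) = d,
        (X : ℚ[X]) ^ ∑ i, cornersCount (C i) =
      X ^ (∑ i, if b i < d i then 1 else 0) *
        ∑ C ∈ (pathTuples_ladder_finite (m + 1) n h (fun i => (p i, n))
          fun i => (m, d i)).toFinset, (X : ℚ[X]) ^ ∑ i, cornersCount (C i) := by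
  rw [mul_sum]
  symm
  refine sum_nbij' (fun C i => C i ∪ {m + 1} ×ˢ Icc (b i) (d i))
    (fun C i => (C i).filter (·.1 ≤ m)) (fun C hC => ?_) (fun C hC => ?_) (fun C hC => ?_)
    (fun C hC => ?_) (fun C hC => ?_)
  all_goals simp only [mem_filter, Set.Finite.mem_toFinset] at hC ⊢
  · exact ⟨union_column_mem_pathTuples hb hb1 hbd hdh hC, funext fun i =>
      entryRow_union_column (hbd.1 i) fun x hx => ((hC.1 i).2.2.2.1 x hx).1.1⟩
  · obtain ⟨hC, rfl⟩ := hC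
    exact truncate_mem_pathTuples hanti hp hC
  · exact funext fun i => filter_union_column fun x hx => ((hC.1 i).2.2.2.1 x hx).1.1
  · obtain ⟨hC, rfl⟩ := hC
    exact funext fun i => ((hC.1 i).eq_union_column ((hp i).trans m.le_succ)).symm
  · rw [← pow_add, ← sum_add_distrib]
    refine congrArg _ (sum_congr rfl fun i _ => ?_)
    rw [cornersCount_union_column (hb1 i) (hbd.1 i) (hC.1 i).2.2.1
      fun x hx => ((hC.1 i).2.2.2.1 x hx).1, add_comm]

end Tuples

theorem transfer_W_general (m n r : ℕ) (h : ℕ → ℕ) (hanti : Antitone h) (hrm : r < m)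
    (b : Fin r → ℕ) (hb : StrictMono b) (hb1 : ∀ i, 1 ≤ b i) :
    WTpoly (ladder m n h) (fun i : Fin r => ((i : ℕ) + 1, n))
        (fun i : Fin r => (m, b i)) (r * (m + n) + 1) =
      ∑ d ∈ (Finset.Icc (fun _ => 1) (fun _ => h m)).filter
          (fun d : Fin r → ℕ => ∀ i j, i < j → d i < d j),
        brkT d b *
          WTpoly (ladder m n h) (fun i : Fin r => ((i : ℕ) + 1, n))
            (fun i : Fin r => (m - 1, d i)) (r * (m + n) + 1) := by
  obtain ⟨m, rfl⟩ : ∃ k, m = k + 1 := ⟨m - 1, by omega⟩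
  have hp : ∀ i : Fin r, (i : ℕ) + 1 ≤ m := fun i => by omega
  rw [Nat.add_sub_cancel, WTpoly_ladder_eq_sum,
    ← sum_fiberwise_of_maps_to (g := fun C i => entryRow (C i) (m + 1)) fun C hC => ?_]
  · refine sum_congr rfl fun d hd => ?_
    by_cases hbd : Interlaces b d
    · rw [brkT_of_interlaces hbd, WTpoly_ladder_eq_sum]
      exact sum_fiber_entryRow hanti hp hb.monotone hb1 hbd (mem_Icc.1 (mem_filter.1 hd).1).2
    · rw [brkT_of_not_interlaces hbd, zero_mul]
      refine sum_eq_zero fun C hC => absurd ?_ hbd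
      obtain ⟨hCmem, rfl⟩ := mem_filter.1 hC
      exact interlaces_entryRow (fun i => (hp i).trans m.le_succ) hb.monotone
        ((Set.Finite.mem_toFinset _).1 hCmem)
  · have hC := (Set.Finite.mem_toFinset _).1 hC
    have hbd := interlaces_entryRow (fun i => (hp i).trans m.le_succ) hb.monotone hC
    refine mem_filter.2 ⟨mem_Icc.2 ⟨fun i => (hb1 i).trans (hbd.1 i), fun i => ?_⟩,
      fun i j hij => hbd.strictMono hb.monotone hij⟩
    exact ((hC.1 i).1 (hC.1 i).entryRow_mem).2.2.2.2

/-- Lemma 2.2(ii) (peeling off column `m`): the non-intersecting-path generating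
polynomial satisfies
`W(n,m; b₁,…,b_r) = ∑_{d ∈ S_r, (m,d_r) ∈ Y} [d;b] · W(n,m-1; d₁,…,d_r)`,
where the sum is over strictly increasing `r`-tuples `d` with `1 ≤ d₁ < ⋯ < d_r ≤ h m`
(i.e. `(m, d_r) ∈ Y`); terms where some `dᵢ < bᵢ` or `dᵢ ≥ b_{i+1}` vanish via `[d;b]`. -/
theorem transfer_W (m n r : ℕ) (h : ℕ → ℕ) (hanti : Antitone h) (h1 : h 1 = n)
    (hr : 1 ≤ r) (hrm : r < m)
    (b : Fin r → ℕ) (hb : StrictMono b) (hb1 : ∀ i, 1 ≤ b i)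
    (hP : n ≤ h r) (hQ : ∀ i, b i ≤ h m) :
    WTpoly (ladder m n h) (fun i : Fin r => ((i : ℕ) + 1, n))
        (fun i : Fin r => (m, b i)) (r * (m + n) + 1) =
      ∑ d ∈ (Finset.Icc (fun _ => 1) (fun _ => h m)).filter
          (fun d : Fin r → ℕ => ∀ i j, i < j → d i < d j),
        brkT d b *
          WTpoly (ladder m n h) (fun i : Fin r => ((i : ℕ) + 1, n))
            (fun i : Fin r => (m - 1, d i)) (r * (m + n) + 1) :=
  transfer_W_general m n r h hanti hrm b hb hb1
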